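/- Among all stable configurations in a given linear equivalence class, the critical configuration is the unique greatest element with respect to the order ⪯_CFG defined by a ⪯_CFG b iff aΔ⁻¹ ⪯ bΔ⁻¹ componentwise. -/

import Mathlib

/-- A finite directed multigraph without loops on `Fin (n+1)` with global sink `Fin.last n`. -/
structure SinkDigraph (n : ℕ) where
  e : Fin (n + 1) → Fin (n + 1) → ℕ
  loopless : ∀ i, e i i = 0
  sink_no_out : ∀ j, e (Fin.last n) j = 0
  path_to_sink : ∀ i, Relation.ReflTransGen (fun u v => 0 < e u v) i (Fin.last n)

namespace SinkDigraph

variable {n : ℕ}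

/-- Out-degree of a vertex. -/
def outDeg (G : SinkDigraph n) (i : Fin (n + 1)) : ℕ := ∑ j, G.e i j

/-- The (full) Laplacian matrix over ℤ. -/
def lap (G : SinkDigraph n) : Matrix (Fin (n + 1)) (Fin (n + 1)) ℤ :=
  Matrix.of fun i j => if i = j then (G.outDeg i : ℤ) else -(G.e i j : ℤ)

/-- The reduced Laplacian (rows/columns of the sink removed). -/
def redLap (G : SinkDigraph n) : Matrix (Fin n) (Fin n) ℤ :=
  Matrix.of fun i j => G.lap i.castSucc j.castSucc

/-- The reduced Laplacian over ℚ. -/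
def redLapQ (G : SinkDigraph n) : Matrix (Fin n) (Fin n) ℚ :=
  (G.redLap).map (Int.cast : ℤ → ℚ)

/-- A ℕ-script viewed as integer vector. -/
def natScript (σ : Fin n → ℕ) : Fin n → ℤ := fun i => (σ i : ℤ)

/-- Result of firing vertex `i` in configuration `a`. -/
def fire (G : SinkDigraph n) (a : Fin n → ℤ) (i : Fin n) : Fin n → ℤ :=
  fun j => a j - G.redLap i j

/-- Result of firing a sequence of vertices. -/
def applySeq (G : SinkDigraph n) : (Fin n → ℤ) → List (Fin n) → (Fin n → ℤ)
  | a, [] => a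
  | a, i :: s => G.applySeq (G.fire a i) s

/-- A firing sequence is legal from `a` if every fired vertex is active when fired. -/
def Legal (G : SinkDigraph n) : (Fin n → ℤ) → List (Fin n) → Prop
  | _, [] => True
  | a, i :: s => G.redLap i i ≤ a i ∧ G.Legal (G.fire a i) s

/-- The firing script of a firing sequence. -/
def script (s : List (Fin n)) : Fin n → ℤ := fun i => (s.count i : ℤ)

/-- A configuration is stable if it is non-negative and no vertex is active. -/
def IsStable (G : SinkDigraph n) (a : Fin n → ℤ) : Prop :=
  ∀ i, 0 ≤ a i ∧ a i < G.redLap i i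

/-- `b` is the stabilization of `a`. -/
def Stabilizes (G : SinkDigraph n) (a b : Fin n → ℤ) : Prop :=
  ∃ s : List (Fin n), G.Legal a s ∧ G.applySeq a s = b ∧ G.IsStable b

/-- The maximal stable configuration `c_max`. -/
def cmax (G : SinkDigraph n) : Fin n → ℤ := fun i => (G.outDeg i.castSucc : ℤ) - 1

/-- A stable configuration is critical if it is the stabilization of `c_max + c`
for some non-negative `c`. -/
def IsCritical (G : SinkDigraph n) (a : Fin n → ℤ) : Prop :=
  ∃ c : Fin n → ℤ, 0 ≤ c ∧ G.Stabilizes (G.cmax + c) a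

/-- `σΔ ≻ 0`, i.e. `σΔ` is non-negative and non-zero. -/
def GPositive (G : SinkDigraph n) (σ : Fin n → ℕ) : Prop :=
  0 ≤ Matrix.vecMul (natScript σ) G.redLap ∧ Matrix.vecMul (natScript σ) G.redLap ≠ 0

/-- Reachability along directed edges. -/
def Reach (G : SinkDigraph n) : Fin (n + 1) → Fin (n + 1) → Prop :=
  Relation.ReflTransGen (fun u v => 0 < G.e u v)

/-- A source component: a strongly connected component with no in-going edge from outside. -/
def IsSourceComponent (G : SinkDigraph n) (S : Set (Fin (n + 1))) : Prop :=
  (∃ i, S = {j | G.Reach i j ∧ G.Reach j i}) ∧ ∀ j ∉ S, ∀ k ∈ S, G.e j k = 0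

/-- A `G`-strongly positive script. -/
def GStronglyPositive (G : SinkDigraph n) (σ : Fin n → ℕ) : Prop :=
  G.GPositive σ ∧ ∀ S : Set (Fin (n + 1)), G.IsSourceComponent S →
    ∃ i : Fin n, i.castSucc ∈ S ∧ Matrix.vecMul (natScript σ) G.redLap i ≠ 0

/-- Linear equivalence of configurations. -/
def Equiv (G : SinkDigraph n) (a b : Fin n → ℤ) : Prop :=
  ∃ σ : Fin n → ℤ, b - a = Matrix.vecMul σ G.redLap

/-- The weight of a configuration. -/
def weight (a : Fin n → ℤ) : ℤ := ∑ i, a i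

/-- The energy (CFG) order: compare energy vectors `aΔ⁻¹` componentwise over ℚ. -/
def cfgLE (G : SinkDigraph n) (a b : Fin n → ℤ) : Prop :=
  Matrix.vecMul (fun i => (a i : ℚ)) (G.redLapQ)⁻¹ ≤
    Matrix.vecMul (fun i => (b i : ℚ)) (G.redLapQ)⁻¹

/-- A non-negative configuration is superstable if reverse-firing any nonzero ℕ-script
produces a negative component. -/
def IsSuperstable (G : SinkDigraph n) (a : Fin n → ℤ) : Prop :=
  0 ≤ a ∧ ∀ σ : Fin n → ℕ, σ ≠ 0 →
    ∃ i, a i - Matrix.vecMul (natScript σ) G.redLap i < 0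

end SinkDigraph

open SinkDigraph Matrix

/-!
Write `a = (c_max + c)°`, reached from `c_max + c` by a legal firing sequence with script `τ`, and
let `b = a + σΔ` be stable. Then `b = c_max + c - ρΔ` with `ρ = τ - σ`, and `ρΔ = c_max + c - b`
is non-negative because `b ≤ c_max`. Since `Δ` is an M-matrix (a negative minimum of a potential
would spread along a path to the sink), `ρ ≥ 0`, and the least action principle gives `τ ≤ ρ`,
i.e. `σ ≤ 0`. As `bΔ⁻¹ - aΔ⁻¹ = σ`, this is `b ⪯_CFG a`; uniqueness is antisymmetry of
`⪯_CFG`, which holds because `Δ` is invertible.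
-/
namespace SinkDigraph

variable {n : ℕ} (G : SinkDigraph n)

lemma redLap_apply (i j : Fin n) :
    G.redLap i j =
      (if i = j then (G.outDeg i.castSucc : ℤ) else 0) - G.e i.castSucc j.castSucc := by
  rcases eq_or_ne i j with rfl | h
  · simp [redLap, lap, G.loopless]
  · simp [redLap, lap, h]

lemma redLap_self (i : Fin n) : G.redLap i i = G.outDeg i.castSucc := by
  simp [redLap_apply, G.loopless]

lemma redLap_nonpos_of_ne {i j : Fin n} (h : i ≠ j) : G.redLap i j ≤ 0 := by
  simp [redLap_apply, h]

lemma redLapQ_mulVec_apply (x : Fin n → ℚ) (i : Fin n) :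
    (G.redLapQ *ᵥ x) i =
      ∑ v, (G.e i.castSucc v : ℚ) * (x i - (Fin.snoc x 0 : Fin (n + 1) → ℚ) v) := by
  simp only [mul_sub, Finset.sum_sub_distrib, ← Finset.sum_mul, Fin.sum_univ_castSucc (n := n),
    Fin.snoc_castSucc, Fin.snoc_last, mul_zero, mulVec, dotProduct, redLapQ, map_apply,
    redLap_apply]
  push_cast
  simp [sub_mul, Finset.sum_sub_distrib, outDeg, Fin.sum_univ_castSucc (n := n)]
  ring

lemma snoc_eq_of_forall_le_of_edge {x : Fin n → ℚ} (hx : 0 ≤ G.redLapQ *ᵥ x) {u : Fin n}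
    (hu : ∀ v, x u ≤ (Fin.snoc x 0 : Fin (n + 1) → ℚ) v) {v : Fin (n + 1)}
    (huv : 0 < G.e u.castSucc v) : (Fin.snoc x 0 : Fin (n + 1) → ℚ) v = x u := by
  have hterms : ∀ w ∈ Finset.univ,
      (G.e u.castSucc w : ℚ) * (x u - (Fin.snoc x 0 : Fin (n + 1) → ℚ) w) ≤ 0 :=
    fun w _ => mul_nonpos_of_nonneg_of_nonpos (by positivity) (sub_nonpos.2 (hu w))
  have hsum := le_antisymm (Finset.sum_nonpos hterms) (G.redLapQ_mulVec_apply x u ▸ hx u)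
  have hv := (Finset.sum_eq_zero_iff_of_nonpos hterms).1 hsum v (Finset.mem_univ v)
  have hev : (G.e u.castSucc v : ℚ) ≠ 0 := by exact_mod_cast huv.ne'
  linarith [(mul_eq_zero.1 hv).resolve_left hev]

lemma nonneg_of_redLapQ_mulVec_nonneg {x : Fin n → ℚ} (hx : 0 ≤ G.redLapQ *ᵥ x) : 0 ≤ x := by
  set y : Fin (n + 1) → ℚ := Fin.snoc x 0 with hy
  obtain ⟨u, -, hu⟩ := Finset.exists_min_image Finset.univ y Finset.univ_nonempty
  by_contra hneg
  obtain ⟨i, hi⟩ : ∃ i, x i < 0 := by simpa [Pi.le_def] using hneg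
  have hyu : y u < 0 := (hu i.castSucc (Finset.mem_univ _)).trans_lt (by simpa [hy] using hi)
  have hlast : y (Fin.last n) = 0 := by simp [hy]
  have hprop : ∀ v, G.Reach u v → y v = y u := by
    intro v huv
    induction huv with
    | refl => rfl
    | @tail b c _ hbc ih =>
      obtain ⟨b', rfl⟩ : ∃ b' : Fin n, b'.castSucc = b :=
        Fin.exists_castSucc_eq.2 fun h => by rw [h, hlast] at ih; linarith
      have hb' : y b'.castSucc = x b' := by simp [hy]
      rw [← ih, hb']
      refine G.snoc_eq_of_forall_le_of_edge hx (fun w => ?_) hbc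
      rw [← hb', ih]
      exact hu w (Finset.mem_univ w)
  linarith [hlast ▸ hprop _ (G.path_to_sink u)]

lemma isUnit_redLapQ : IsUnit G.redLapQ := by
  refine mulVec_injective_iff_isUnit.1 fun x y hxy => le_antisymm ?_ ?_ <;>
    rw [← sub_nonneg] <;> apply G.nonneg_of_redLapQ_mulVec_nonneg <;> simp [mulVec_sub, hxy]

lemma isUnit_det_redLapQ : IsUnit G.redLapQ.det :=
  (isUnit_iff_isUnit_det _).1 G.isUnit_redLapQ

lemma redLapQ_inv_nonneg (i j : Fin n) : 0 ≤ G.redLapQ⁻¹ i j := by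
  have hcol : G.redLapQ *ᵥ (G.redLapQ⁻¹ *ᵥ Pi.single j 1) = Pi.single j 1 := by
    rw [mulVec_mulVec, mul_nonsing_inv _ G.isUnit_det_redLapQ, one_mulVec]
  have := G.nonneg_of_redLapQ_mulVec_nonneg (hcol ▸ Pi.single_nonneg.2 zero_le_one) i
  simpa [mulVec_single_one] using this

lemma nonneg_of_vecMul_redLapQ_nonneg {y : Fin n → ℚ} (hy : 0 ≤ y ᵥ* G.redLapQ) : 0 ≤ y := by
  have hinv : y = (y ᵥ* G.redLapQ) ᵥ* G.redLapQ⁻¹ := by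
    rw [vecMul_vecMul, mul_nonsing_inv _ G.isUnit_det_redLapQ, vecMul_one]
  rw [hinv]
  exact fun j => Finset.sum_nonneg fun i _ => mul_nonneg (hy i) (G.redLapQ_inv_nonneg i j)

lemma cast_vecMul_redLapQ (σ : Fin n → ℤ) :
    (fun i => (σ i : ℚ)) ᵥ* G.redLapQ = fun j => ((σ ᵥ* G.redLap) j : ℚ) :=
  funext fun j => (RingHom.map_vecMul (Int.castRingHom ℚ) G.redLap σ j).symm

lemma nonneg_of_vecMul_redLap_nonneg {σ : Fin n → ℤ} (hσ : 0 ≤ σ ᵥ* G.redLap) : 0 ≤ σ := by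
  have hq : 0 ≤ (fun i => (σ i : ℚ)) ᵥ* G.redLapQ := by
    rw [cast_vecMul_redLapQ]
    exact fun j => Int.cast_nonneg_iff.2 (hσ j)
  exact fun i => Int.cast_nonneg_iff.1 (G.nonneg_of_vecMul_redLapQ_nonneg hq i)

lemma fire_eq (a : Fin n → ℤ) (i : Fin n) : G.fire a i = a - Pi.single i 1 ᵥ* G.redLap := by
  rw [single_one_vecMul]
  rfl

lemma script_nil : script ([] : List (Fin n)) = 0 := rfl

lemma script_cons (i : Fin n) (s : List (Fin n)) : script (i :: s) = Pi.single i 1 + script s := by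
  funext j
  rcases eq_or_ne j i with rfl | h
  · simp [script, add_comm]
  · simp [script, h, Ne.symm h]

lemma applySeq_eq (a : Fin n → ℤ) (s : List (Fin n)) :
    G.applySeq a s = a - script s ᵥ* G.redLap := by
  induction s generalizing a with
  | nil => simp [applySeq, script_nil]
  | cons i s ih => rw [applySeq, ih, fire_eq, script_cons, add_vecMul, sub_sub]

lemma vecMul_redLap_apply_nonpos {ρ : Fin n → ℤ} (hρ : 0 ≤ ρ) {i : Fin n} (hi : ρ i = 0) :
    (ρ ᵥ* G.redLap) i ≤ 0 := by
  rw [vecMul, dotProduct]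
  refine Finset.sum_nonpos fun k (_ : k ∈ Finset.univ) => ?_
  rcases eq_or_ne k i with rfl | hk
  · simp [hi]
  · exact mul_nonpos_of_nonneg_of_nonpos (hρ k) (G.redLap_nonpos_of_ne hk)

/-- The least action principle. -/
lemma script_le_of_legal {s : List (Fin n)} {x ρ : Fin n → ℤ} (hs : G.Legal x s) (hρ : 0 ≤ ρ)
    (hρx : ∀ i, (x - ρ ᵥ* G.redLap) i < G.redLap i i) : script s ≤ ρ := by
  induction s generalizing x ρ with
  | nil => simpa [script_nil] using hρ
  | cons i s ih =>
    obtain ⟨hact, hs⟩ := hs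
    have hρi : 1 ≤ ρ i := by
      by_contra! hlt
      have := G.vecMul_redLap_apply_nonpos hρ (le_antisymm (by omega) (hρ i))
      have := hρx i
      simp only [Pi.sub_apply] at this
      omega
    have hρ' : 0 ≤ ρ - Pi.single i 1 := by
      intro j
      rcases eq_or_ne j i with rfl | h
      · simpa using hρi
      · simpa [h] using hρ j
    have hfire : G.fire x i - (ρ - Pi.single i 1) ᵥ* G.redLap = x - ρ ᵥ* G.redLap := by
      rw [fire_eq, sub_vecMul]
      abel
    calc script (i :: s) = Pi.single i 1 + script s := script_cons i s
      _ ≤ Pi.single i 1 + (ρ - Pi.single i 1) := add_le_add_right (ih hs hρ' (hfire ▸ hρx)) _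
      _ = ρ := add_sub_cancel _ _

lemma cmax_add_sub_nonneg {b c : Fin n → ℤ} (hc : 0 ≤ c) (hb : ∀ i, b i < G.redLap i i) :
    0 ≤ G.cmax + c - b := by
  intro i
  have hci : 0 ≤ c i := hc i
  have := G.redLap_self i ▸ hb i
  simp only [cmax, Pi.add_apply, Pi.sub_apply, Pi.zero_apply]
  omega

lemma nonpos_of_isCritical {a b σ : Fin n → ℤ} (ha : G.IsCritical a)
    (hb : ∀ i, b i < G.redLap i i) (hσ : b - a = σ ᵥ* G.redLap) : σ ≤ 0 := by
  obtain ⟨c, hc, s, hs, rfl, -⟩ := ha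
  rw [applySeq_eq] at hσ
  have hρb : G.cmax + c - (script s - σ) ᵥ* G.redLap = b := by
    rw [sub_vecMul, ← hσ]
    abel
  have hρ : 0 ≤ script s - σ := G.nonneg_of_vecMul_redLap_nonneg <| by
    simpa [← hρb] using G.cmax_add_sub_nonneg hc hb
  simpa using sub_nonneg.2 (G.script_le_of_legal hs hρ (hρb ▸ hb))

lemma cast_sub_vecMul_redLapQ_inv {a b σ : Fin n → ℤ} (h : b - a = σ ᵥ* G.redLap) :
    (fun i => (b i : ℚ)) ᵥ* G.redLapQ⁻¹ - (fun i => (a i : ℚ)) ᵥ* G.redLapQ⁻¹ =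
      fun i => (σ i : ℚ) := by
  have hq : (fun i => (b i : ℚ)) - (fun i => (a i : ℚ)) = (fun i => (σ i : ℚ)) ᵥ* G.redLapQ := by
    rw [cast_vecMul_redLapQ, ← h]
    funext i
    simp
  rw [← sub_vecMul, hq, vecMul_vecMul, mul_nonsing_inv _ G.isUnit_det_redLapQ, vecMul_one]

lemma cfgLE_of_sub_eq_vecMul {a b σ : Fin n → ℤ} (h : b - a = σ ᵥ* G.redLap) (hσ : σ ≤ 0) :
    G.cfgLE b a := fun i => by
  have := congrFun (G.cast_sub_vecMul_redLapQ_inv h) i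
  simp only [Pi.sub_apply] at this
  linarith [(Int.cast_nonpos (R := ℚ)).2 (hσ i)]

lemma cfgLE_antisymm {a b : Fin n → ℤ} (hab : G.cfgLE a b) (hba : G.cfgLE b a) : a = b := by
  have hinj := vecMul_injective_iff_isUnit.2
    ((isUnit_iff_isUnit_det _).2 (isUnit_nonsing_inv_det _ G.isUnit_det_redLapQ))
  have := hinj (le_antisymm hab hba)
  funext i
  exact_mod_cast congrFun this i

lemma IsCritical.isStable {a : Fin n → ℤ} (ha : G.IsCritical a) : G.IsStable a :=
  let ⟨_, _, _, _, _, h⟩ := ha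
  h

lemma equiv_refl (a : Fin n → ℤ) : G.Equiv a a := ⟨0, by simp⟩

end SinkDigraph

theorem critical_cfg_greatest (n : ℕ) (G : SinkDigraph n) (a : Fin n → ℤ)
    (ha : G.IsCritical a) :
    (∀ b : Fin n → ℤ, G.IsStable b → G.Equiv a b → G.cfgLE b a) ∧
    (∀ b : Fin n → ℤ, G.IsStable b → G.Equiv a b →
      (∀ c : Fin n → ℤ, G.IsStable c → G.Equiv a c → G.cfgLE c b) → b = a) := by
  have greatest : ∀ b : Fin n → ℤ, G.IsStable b → G.Equiv a b → G.cfgLE b a :=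
    fun b hb ⟨σ, hσ⟩ =>
      G.cfgLE_of_sub_eq_vecMul hσ (G.nonpos_of_isCritical ha (fun i => (hb i).2) hσ)
  exact ⟨greatest, fun b hb hab hmax =>
    G.cfgLE_antisymm (greatest b hb hab) (hmax a ha.isStable (G.equiv_refl a))⟩
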